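/- arXiv:math/0507466 — 2 statements merged into one kernel-verified Lean document; each statement's English description precedes it below -/
import Mathlib

section
/- Let G be a locally compact group and Y a solid quasi-Banach function space on G with p-norm (0<p≤1) such that the Wiener amalgam space W(L^∞,Y) is invariant under all left translations L_y and all right translations R_y. If G: G→ℂ is continuous with G ∈ W(C_0,Y) and with K(G^∨,Q,L^∞)^∨ ∈ W(L^∞,Y) (i.e. G ∈ W(C_0,W(L^∞,Y)^∨)^∨), then for every relatively compact neighborhood U of the identity e the U-oscillation G^#_U belongs to W(C_0,Y). -/
/- Common setup for coorbit space theory on locally compact groups,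
following Rauhut, "Coorbit space theory for quasi-Banach spaces". -/

noncomputable section
open Classical MeasureTheory Filter Topology
open scoped ENNReal NNReal BigOperators Pointwise

namespace CoorbitQB

variable {G : Type*} [Group G] [TopologicalSpace G] [IsTopologicalGroup G]
  [LocallyCompactSpace G] [T2Space G] [MeasurableSpace G] [BorelSpace G]

/-- A fixed choice of left Haar measure on `G`. -/
def μG (G : Type*) [Group G] [TopologicalSpace G] [IsTopologicalGroup G]
    [LocallyCompactSpace G] [T2Space G] [MeasurableSpace G] [BorelSpace G] :
    Measure G := MeasureTheory.Measure.haar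

/-- Left translation `L_x F (y) = F (x⁻¹ y)`. -/
def Ltrans (x : G) (F : G → ℂ) : G → ℂ := fun y => F (x⁻¹ * y)

/-- Right translation `R_x F (y) = F (y x)`. -/
def Rtrans (x : G) (F : G → ℂ) : G → ℂ := fun y => F (y * x)

/-- Involution `F^∨(x) = F(x⁻¹)`. -/
def invol (F : G → ℂ) : G → ℂ := fun x => F x⁻¹

/-- Control function `K(F,Q,L^∞)(x) = sup_{z ∈ xQ} |F(z)|`. -/
def ctrl (Q : Set G) (F : G → ℂ) : G → ℝ := fun x => ⨆ q : Q, ‖F (x * (q : G))‖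

/-- The `U`-oscillation `F^#_U(x) = sup_{u ∈ U} |F(ux) - F(x)|`. -/
def osc (U : Set G) (F : G → ℂ) : G → ℝ := fun x => ⨆ u : U, ‖F ((u : G) * x) - F x‖

/-- A solid quasi-Banach function space on `G` whose quasi-norm satisfies the
`p`-triangle inequality, is solid, complete, and contains the characteristic
functions of compact sets. -/
structure SolidQB (G : Type*) [Group G] [TopologicalSpace G] [IsTopologicalGroup G]
    [LocallyCompactSpace G] [T2Space G] [MeasurableSpace G] [BorelSpace G] (p : ℝ) where
  Mem : (G → ℂ) → Prop
  N : (G → ℂ) → ℝ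
  norm_nonneg : ∀ F, 0 ≤ N F
  norm_zero : N 0 = 0
  zero_mem : Mem 0
  add_mem : ∀ F H, Mem F → Mem H → Mem (F + H)
  smul_mem : ∀ (c : ℂ) F, Mem F → Mem (c • F)
  norm_smul : ∀ (c : ℂ) F, N (c • F) = ‖c‖ * N F
  ptriangle : ∀ F H, Mem F → Mem H → N (F + H) ^ p ≤ N F ^ p + N H ^ p
  solid : ∀ F H, Mem F → (∀ x, ‖H x‖ ≤ ‖F x‖) → Mem H ∧ N H ≤ N F
  indicator_mem : ∀ K : Set G, IsCompact K → Mem (K.indicator fun _ => (1 : ℂ))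
  complete : ∀ F : ℕ → G → ℂ, (∀ n, Mem (F n)) →
    (∀ ε : ℝ, 0 < ε → ∃ n₀ : ℕ, ∀ m n, n₀ ≤ m → n₀ ≤ n → N (F m - F n) < ε) →
    ∃ Flim, Mem Flim ∧ Tendsto (fun n => N (F n - Flim)) atTop (𝓝 (0 : ℝ))

variable {p : ℝ}

/-- Membership in the Wiener amalgam space `W(L^∞, Y)` (w.r.t. the window `Q`). -/
def WMem (Y : SolidQB G p) (Q : Set G) (F : G → ℂ) : Prop :=
  Y.Mem fun x => ((ctrl Q F x : ℝ) : ℂ)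

/-- Quasi-norm of the Wiener amalgam space `W(L^∞, Y)`. -/
def WN (Y : SolidQB G p) (Q : Set G) (F : G → ℂ) : ℝ :=
  Y.N fun x => ((ctrl Q F x : ℝ) : ℂ)

/-- An operator `T` is bounded w.r.t. the quasi-normed function space data `(Mem, Nm)`. -/
def BoundedOn (Mem : (G → ℂ) → Prop) (Nm : (G → ℂ) → ℝ) (T : (G → ℂ) → G → ℂ) : Prop :=
  ∃ C : ℝ, 0 ≤ C ∧ ∀ F, Mem F → Mem (T F) ∧ Nm (T F) ≤ C * Nm F

/-- Operator quasi-norm `|||T|||` w.r.t. the quasi-normed function space data `(Mem, Nm)`. -/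
def opN (Mem : (G → ℂ) → Prop) (Nm : (G → ℂ) → ℝ) (T : (G → ℂ) → G → ℂ) : ℝ :=
  sInf {C : ℝ | 0 ≤ C ∧ ∀ F, Mem F → Mem (T F) ∧ Nm (T F) ≤ C * Nm F}

/-- `W(L^∞,Y)` is left translation invariant. -/
def LeftInvW (Y : SolidQB G p) (Q : Set G) : Prop :=
  ∀ x : G, BoundedOn (WMem Y Q) (WN Y Q) (Ltrans x)

/-- `W(L^∞,Y)` is right translation invariant. -/
def RightInvW (Y : SolidQB G p) (Q : Set G) : Prop :=
  ∀ x : G, BoundedOn (WMem Y Q) (WN Y Q) (Rtrans x)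

/-- A submultiplicative weight. -/
def Submul (w : G → ℝ) : Prop :=
  Continuous w ∧ (∀ x, 0 < w x) ∧ ∀ x y, w (x * y) ≤ w x * w y

/-- Membership in the weighted Lebesgue space `L^q_w` over the Haar measure. -/
def LpwMem (w : G → ℝ) (q : ℝ) (F : G → ℂ) : Prop :=
  MemLp (fun x => ‖F x‖ * w x) (ENNReal.ofReal q) (μG G)

/-- Quasi-norm of `L^q_w`. -/
def LpwN (w : G → ℝ) (q : ℝ) (F : G → ℂ) : ℝ :=
  (eLpNorm (fun x => ‖F x‖ * w x) (ENNReal.ofReal q) (μG G)).toReal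

/-- Membership in `W(L^∞, L^q_w)`. -/
def WLpwMem (w : G → ℝ) (q : ℝ) (Q : Set G) (F : G → ℂ) : Prop :=
  LpwMem w q fun x => ((ctrl Q F x : ℝ) : ℂ)

/-- Quasi-norm of `W(L^∞, L^q_w)`. -/
def WLpwN (w : G → ℝ) (q : ℝ) (Q : Set G) (F : G → ℂ) : ℝ :=
  LpwN w q fun x => ((ctrl Q F x : ℝ) : ℂ)

/-- Convolution on `G` w.r.t. left Haar measure. -/
def conv (F H : G → ℂ) : G → ℂ := fun x => ∫ y, F y * H (y⁻¹ * x) ∂(μG G)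

/-- A relatively compact neighborhood of the identity. -/
def RelCptNbhd (Q : Set G) : Prop := Q ∈ 𝓝 (1 : G) ∧ IsCompact (closure Q)

/-- `Δ` is the modular function of `G`:  `∫ F(y x) dy = Δ(x⁻¹) ∫ F(y) dy`. -/
def IsModular (Δ : G → ℝ) : Prop :=
  (∀ x, 0 < Δ x) ∧
    ∀ x : G, Measure.map (fun y => y * x) (μG G) = ENNReal.ofReal (Δ x⁻¹) • μG G

/-- `G` is an IN group: some compact neighborhood of the identity is invariant
under conjugation. -/
def IsINGroup (G : Type*) [Group G] [TopologicalSpace G] : Prop :=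
  ∃ Q₀ : Set G, IsCompact Q₀ ∧ Q₀ ∈ 𝓝 (1 : G) ∧
    ∀ x : G, (fun y => x * y) '' Q₀ = (fun y => y * x) '' Q₀

/-- `X = (x_i)` is relatively separated. -/
def RelSeparated {I : Type*} (x : I → G) : Prop :=
  ∀ K : Set G, IsCompact K → ∃ C : ℕ, ∀ j : I,
    {i : I | (x i • K ∩ x j • K).Nonempty}.Finite ∧
    {i : I | (x i • K ∩ x j • K).Nonempty}.ncard ≤ C

/-- `X = (x_i)` is `V`-dense: `G = ⋃ᵢ x_i V`. -/
def VDense {I : Type*} (x : I → G) (V : Set G) : Prop := ∀ g : G, ∃ i, g ∈ x i • V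

/-- `X` is well-spread: relatively separated and `V`-dense for some relatively
compact neighborhood `V` of the identity. -/
def WellSpread {I : Type*} (x : I → G) : Prop :=
  RelSeparated x ∧ ∃ V : Set G, V ∈ 𝓝 (1 : G) ∧ IsCompact (closure V) ∧ VDense x V

/-- The function `g ↦ Σᵢ |λᵢ| χ_{xᵢQ}(g)` defining the sequence space `Y_d`. -/
def YdFun {I : Type*} (x : I → G) (Q : Set G) (lam : I → ℂ) : G → ℝ :=
  fun g => ∑' i, ‖lam i‖ * (x i • Q).indicator (fun _ => (1 : ℝ)) g

/-- Membership in the sequence space `Y_d(X,Q)`. -/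
def YdMem (Y : SolidQB G p) {I : Type*} (x : I → G) (Q : Set G) (lam : I → ℂ) : Prop :=
  Y.Mem fun g => ((YdFun x Q lam g : ℝ) : ℂ)

/-- Quasi-norm of the sequence space `Y_d(X,Q)`. -/
def YdN (Y : SolidQB G p) {I : Type*} (x : I → G) (Q : Set G) (lam : I → ℂ) : ℝ :=
  Y.N fun g => ((YdFun x Q lam g : ℝ) : ℂ)

/-- The finitely supported sequences are dense in `Y_d(X,Q)`. -/
def FinDense (Y : SolidQB G p) {I : Type*} (x : I → G) (Q : Set G) : Prop :=
  ∀ lam : I → ℂ, YdMem Y x Q lam → ∀ ε : ℝ, 0 < ε → ∃ s : Finset I,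
    YdN Y x Q (fun i => if i ∈ s then 0 else lam i) < ε

/-- A bounded uniform partition of unity of size `U`, subordinate to `(x_i)`. -/
structure BUPU {I : Type*} (x : I → G) (U : Set G) where
  ψ : I → G → ℝ
  cont : ∀ i, Continuous (ψ i)
  cptsupp : ∀ i, HasCompactSupport (ψ i)
  nonneg : ∀ i g, 0 ≤ ψ i g
  le_one : ∀ i g, ψ i g ≤ 1
  sum_one : ∀ g : G, HasSum (fun i => ψ i g) 1
  supp : ∀ i, Function.support (ψ i) ⊆ x i • U

/-- Pairing `⟨F, ψ⟩ = ∫ F ψ`. -/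
def pairing (F : G → ℂ) (ψ : G → ℝ) : ℂ := ∫ y, F y * ((ψ y : ℝ) : ℂ) ∂(μG G)

/-- (An equivalent form of) the total-variation control function `K(μ,Q,M)(x)` of a
complex measure. -/
def ctrlM (Q : Set G) (μ : MeasureTheory.ComplexMeasure G) : G → ℝ :=
  fun x => ((ComplexMeasure.re μ).totalVariation (x • Q)).toReal +
    ((ComplexMeasure.im μ).totalVariation (x • Q)).toReal

/-- The operator `A_x μ (k) = μ (R_x k)`, i.e. the image of `μ` under `y ↦ y x`. -/
def Ameas (x : G) (μ : MeasureTheory.ComplexMeasure G) : MeasureTheory.ComplexMeasure G :=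
  μ.map (fun y => y * x)

/-- Membership of a complex measure in the amalgam `W(M,Y)`. -/
def WMMem (Y : SolidQB G p) (Q : Set G) (μ : MeasureTheory.ComplexMeasure G) : Prop :=
  Y.Mem fun x => ((ctrlM Q μ x : ℝ) : ℂ)

/-- Quasi-norm of `W(M,Y)`. -/
def WMN (Y : SolidQB G p) (Q : Set G) (μ : MeasureTheory.ComplexMeasure G) : ℝ :=
  Y.N fun x => ((ctrlM Q μ x : ℝ) : ℂ)

/-- The operator quasi-norm `|||A_x | W(M,Y)|||`. -/
def opNM (Y : SolidQB G p) (Q : Set G) (x : G) : ℝ :=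
  sInf {C : ℝ | 0 ≤ C ∧ ∀ μ : MeasureTheory.ComplexMeasure G, WMMem Y Q μ →
    WMMem Y Q (Ameas x μ) ∧ WMN Y Q (Ameas x μ) ≤ C * WMN Y Q μ}

/-- The operator quasi-norm `|||L_x | W(L^∞,Y)|||`. -/
def opL (Y : SolidQB G p) (Q : Set G) (x : G) : ℝ := opN (WMem Y Q) (WN Y Q) (Ltrans x)

/-- The operator quasi-norm `|||R_x | W(L^∞,Y)|||`. -/
def opR (Y : SolidQB G p) (Q : Set G) (x : G) : ℝ := opN (WMem Y Q) (WN Y Q) (Rtrans x)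

/-- The weight `w(x) = max{|||R_x|||, Δ(x⁻¹)|||R_{x⁻¹}|||}` associated with `Y`. -/
def wY (Y : SolidQB G p) (Q : Set G) (Δ : G → ℝ) (x : G) : ℝ :=
  max (opR Y Q x) (Δ x⁻¹ * opR Y Q x⁻¹)

/-- The weight `v(x) = max{1, |||L_{x⁻¹}|||}` associated with `Y`. -/
def vY (Y : SolidQB G p) (Q : Set G) (x : G) : ℝ := max 1 (opL Y Q x⁻¹)

/-- The weight `w̃(x) = max{w(x), |||A_x|W(M,Y)|||}`. -/
def wtY (Y : SolidQB G p) (Q : Set G) (Δ : G → ℝ) (x : G) : ℝ :=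
  max (wY Y Q Δ x) (opNM Y Q x)

variable {H : Type*} [NormedAddCommGroup H] [InnerProductSpace ℂ H] [CompleteSpace H]

/-- The (abstract) wavelet/voice transform `V_g f (x) = ⟨f, π(x) g⟩`
(linear in `f`, conjugate-linear in `g`). -/
def Voice (π : G →* (H ≃ₗᵢ[ℂ] H)) (g f : H) : G → ℂ :=
  fun x => @inner ℂ _ _ ((π x) g) f

/-- `π` is strongly continuous. -/
def StrongCont (π : G →* (H ≃ₗᵢ[ℂ] H)) : Prop := ∀ f : H, Continuous fun x => (π x) f

/-- `π` is (topologically) irreducible. -/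
def IsIrreducible (π : G →* (H ≃ₗᵢ[ℂ] H)) : Prop :=
  ∀ S : Submodule ℂ H, IsClosed (S : Set H) →
    (∀ (x : G) f, f ∈ S → (π x) f ∈ S) → S = ⊥ ∨ S = ⊤

/-- `g` is admissible: `V_g g ∈ L²(G)`. -/
def Admissible (π : G →* (H ≃ₗᵢ[ℂ] H)) (g : H) : Prop :=
  MemLp (Voice π g g) 2 (μG G)

/-- `g ∈ 𝔸_v`, i.e. `V_g g ∈ L¹_v`. -/
def AvMem (π : G →* (H ≃ₗᵢ[ℂ] H)) (v : G → ℝ) (g : H) : Prop :=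
  Integrable (fun x => ‖Voice π g g x‖ * v x) (μG G)

/-- Membership in `H¹_v` (w.r.t. the analyzing vector `g₀`). -/
def Hv1Mem (π : G →* (H ≃ₗᵢ[ℂ] H)) (g₀ : H) (v : G → ℝ) (f : H) : Prop :=
  Integrable (fun x => ‖Voice π g₀ f x‖ * v x) (μG G)

/-- The norm of `H¹_v`. -/
def Hv1N (π : G →* (H ≃ₗᵢ[ℂ] H)) (g₀ : H) (v : G → ℝ) (f : H) : ℝ :=
  ∫ x, ‖Voice π g₀ f x‖ * v x ∂(μG G)

/-- The anti-dual `(H¹_v)^⌐`: bounded conjugate-linear functionals on `H¹_v`. -/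
structure AntiDual (π : G →* (H ≃ₗᵢ[ℂ] H)) (g₀ : H) (v : G → ℝ) where
  toFun : H → ℂ
  add' : ∀ f h, Hv1Mem π g₀ v f → Hv1Mem π g₀ v h → toFun (f + h) = toFun f + toFun h
  smul' : ∀ (c : ℂ) f, Hv1Mem π g₀ v f → toFun (c • f) = (starRingEnd ℂ) c * toFun f
  bound' : ∃ C : ℝ, ∀ f, Hv1Mem π g₀ v f → ‖toFun f‖ ≤ C * Hv1N π g₀ v f

/-- The extended voice transform on the reservoir `(H¹_v)^⌐`. -/
def VoiceD {π : G →* (H ≃ₗᵢ[ℂ] H)} {g₀ : H} {v : G → ℝ}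
    (T : AntiDual π g₀ v) (g : H) : G → ℂ := fun x => T.toFun ((π x) g)

/-- `g` belongs to the analyzing-vector class `ℬ^p_w`. -/
def BpwMem (π : G →* (H ≃ₗᵢ[ℂ] H)) (w : G → ℝ) (q : ℝ) (Q : Set G) (g : H) : Prop :=
  Admissible π g ∧ WLpwMem w q Q (Voice π g g)

/-- `g` belongs to `𝔹(Y) = ℬ^p_w ∩ 𝔸_v` (with the weights derived from `Y`). -/
def BYMem (Y : SolidQB G p) (Q : Set G) (Δ : G → ℝ)
    (π : G →* (H ≃ₗᵢ[ℂ] H)) (g : H) : Prop :=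
  BpwMem π (wY Y Q Δ) p Q g ∧ AvMem π (vY Y Q) g

/-- The extra condition `V_g g ∈ W(C_0, W(L^∞, L^p_w)^∨)^∨`, formulated as
`K((V_g g)^∨, Q, L^∞)^∨ ∈ W(L^∞, L^p_w)`. -/
def VggInvCond (π : G →* (H ≃ₗᵢ[ℂ] H)) (w : G → ℝ) (q : ℝ) (Q : Set G) (g : H) : Prop :=
  WLpwMem w q Q fun z => ((ctrl Q (invol (Voice π g g)) z⁻¹ : ℝ) : ℂ)

/-- `g` belongs to the class `𝔻(Y)` of Theorem 5.6. -/
def DYMem (Y : SolidQB G p) (Q : Set G) (Δ : G → ℝ)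
    (π : G →* (H ≃ₗᵢ[ℂ] H)) (g : H) : Prop :=
  AvMem π (vY Y Q) g ∧ WLpwMem (wtY Y Q Δ) p Q (Voice π g g) ∧
    VggInvCond π (wY Y Q Δ) p Q g

/-- Membership in the coorbit space `C(Y) = Co W(L^∞,Y)`. -/
def CoMem (Y : SolidQB G p) (Q : Set G) {π : G →* (H ≃ₗᵢ[ℂ] H)} {g₀ : H} {v : G → ℝ}
    (g : H) (T : AntiDual π g₀ v) : Prop := WMem Y Q (VoiceD T g)

/-- Quasi-norm of the coorbit space `C(Y)`. -/
def CoN (Y : SolidQB G p) (Q : Set G) {π : G →* (H ≃ₗᵢ[ℂ] H)} {g₀ : H} {v : G → ℝ}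
    (g : H) (T : AntiDual π g₀ v) : ℝ := WN Y Q (VoiceD T g)


/-- A conjugate-linear functional defined (at least) on `{f | P f}`
(used to model the anti-dual `𝕊^⌐` of a π-invariant test space `𝕊`). -/
structure AntiFun {H : Type*} [NormedAddCommGroup H] [InnerProductSpace ℂ H]
    (P : H → Prop) where
  toFun : H → ℂ
  add' : ∀ f h, P f → P h → toFun (f + h) = toFun f + toFun h
  smul' : ∀ (c : ℂ) f, P f → toFun (c • f) = (starRingEnd ℂ) c * toFun f

/-- `|||R_x | W(L^∞, L^q_w)|||`. -/
def opRw (w : G → ℝ) (q : ℝ) (Q : Set G) (x : G) : ℝ :=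
  opN (WLpwMem w q Q) (WLpwN w q Q) (Rtrans x)

/-- `|||L_x | W(L^∞, L^q_w)|||`. -/
def opLw (w : G → ℝ) (q : ℝ) (Q : Set G) (x : G) : ℝ :=
  opN (WLpwMem w q Q) (WLpwN w q Q) (Ltrans x)

/-- Membership of a complex measure in `W(M, L^q_w)`. -/
def WMMemw (w : G → ℝ) (q : ℝ) (Q : Set G) (μ : MeasureTheory.ComplexMeasure G) : Prop :=
  LpwMem w q fun z => ((ctrlM Q μ z : ℝ) : ℂ)

/-- Quasi-norm of `W(M, L^q_w)`. -/
def WMNw (w : G → ℝ) (q : ℝ) (Q : Set G) (μ : MeasureTheory.ComplexMeasure G) : ℝ :=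
  LpwN w q fun z => ((ctrlM Q μ z : ℝ) : ℂ)

/-- `|||A_x | W(M, L^q_w)|||`. -/
def opNMw (w : G → ℝ) (q : ℝ) (Q : Set G) (x : G) : ℝ :=
  sInf {C : ℝ | 0 ≤ C ∧ ∀ μ : MeasureTheory.ComplexMeasure G, WMMemw w q Q μ →
    WMMemw w q Q (Ameas x μ) ∧ WMNw w q Q (Ameas x μ) ≤ C * WMNw w q Q μ}

/-- The weight `w` associated with the space `L^q_u`. -/
def wLp (u : G → ℝ) (q : ℝ) (Q : Set G) (Δ : G → ℝ) (x : G) : ℝ :=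
  max (opRw u q Q x) (Δ x⁻¹ * opRw u q Q x⁻¹)

/-- The weight `v` associated with the space `L^q_u`. -/
def vLp (u : G → ℝ) (q : ℝ) (Q : Set G) (x : G) : ℝ := max 1 (opLw u q Q x⁻¹)

/-- The weight `w̃` associated with the space `L^q_u`. -/
def wtLp (u : G → ℝ) (q : ℝ) (Q : Set G) (Δ : G → ℝ) (x : G) : ℝ :=
  max (wLp u q Q Δ x) (opNMw u q Q x)

/-- `g ∈ 𝔻(L^q_u)`. -/
def DLpMem (u : G → ℝ) (q : ℝ) (Q : Set G) (Δ : G → ℝ)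
    (π : G →* (H ≃ₗᵢ[ℂ] H)) (g : H) : Prop :=
  AvMem π (vLp u q Q) g ∧ WLpwMem (wtLp u q Q Δ) q Q (Voice π g g) ∧
    VggInvCond π (wLp u q Q Δ) q Q g


section OscLemma

variable {G : Type*} [Group G] [TopologicalSpace G] [IsTopologicalGroup G]
  [LocallyCompactSpace G] [T2Space G] [MeasurableSpace G] [BorelSpace G]

lemma ctrl_nonneg (Q : Set G) (F : G → ℂ) (x : G) : 0 ≤ ctrl Q F x :=
  Real.iSup_nonneg fun _ => norm_nonneg _

lemma osc_nonneg (U : Set G) (F : G → ℂ) (x : G) : 0 ≤ osc U F x :=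
  Real.iSup_nonneg fun _ => norm_nonneg _

lemma bddAbove_ctrl_range {Q : Set G} (hQc : IsCompact (closure Q)) {F : G → ℂ}
    (hF : Continuous F) (x : G) :
    BddAbove (Set.range fun q : Q => ‖F (x * (q : G))‖) := by
  have hK : IsCompact ((fun q : G => ‖F (x * q)‖) '' closure Q) :=
    hQc.image (by continuity)
  refine hK.bddAbove.mono ?_
  rintro _ ⟨q, rfl⟩
  exact ⟨(q : G), subset_closure q.2, rfl⟩

lemma bddAbove_ctrl_inv_range {Q : Set G} (hQc : IsCompact (closure Q)) (hQ1 : (1 : G) ∈ Q)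
    {F : G → ℂ} (hF : Continuous F) (y : G) :
    BddAbove (Set.range fun r : Q =>
      ‖((ctrl Q (invol F) ((y * (r : G)))⁻¹ : ℝ) : ℂ)‖) := by
  have hK2 : IsCompact ((closure Q)⁻¹ * ({y} * closure Q)) :=
    hQc.inv.mul (isCompact_singleton.mul hQc)
  set C : ℝ := sSup ((fun g => ‖F g‖) '' ((closure Q)⁻¹ * ({y} * closure Q))) with hC
  have hbddC : BddAbove ((fun g => ‖F g‖) '' ((closure Q)⁻¹ * ({y} * closure Q))) :=
    hK2.bddAbove_image (hF.norm.continuousOn)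
  have hmem0 : ((1 : G))⁻¹ * (y * 1) ∈ (closure Q)⁻¹ * ({y} * closure Q) :=
    Set.mul_mem_mul (Set.inv_mem_inv.mpr (subset_closure hQ1))
      (Set.mul_mem_mul rfl (subset_closure hQ1))
  have hC0 : 0 ≤ C := (norm_nonneg _).trans (le_csSup hbddC ⟨_, hmem0, rfl⟩)
  refine ⟨C, ?_⟩
  rintro v ⟨r, rfl⟩
  show ‖((ctrl Q (invol F) ((y * (r : G)))⁻¹ : ℝ) : ℂ)‖ ≤ C
  rw [Complex.norm_real, Real.norm_eq_abs, abs_of_nonneg (ctrl_nonneg _ _ _)]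
  refine Real.iSup_le (fun r' => ?_) hC0
  have harg : invol F ((y * (r : G))⁻¹ * (r' : G)) = F ((r' : G)⁻¹ * (y * (r : G))) := by
    simp [invol, mul_inv_rev]
  rw [harg]
  exact le_csSup hbddC ⟨_, Set.mul_mem_mul (Set.inv_mem_inv.mpr (subset_closure r'.2))
    (Set.mul_mem_mul rfl (subset_closure r.2)), rfl⟩

end OscLemma

/-- **Lemma 3.8(a)** (Rauhut, *Coorbit space theory for quasi-Banach spaces*).
If `W(L^∞,Y)` is left and right translation invariant and
`G₀ ∈ W(C_0, W(L^∞,Y)^∨)^∨ ∩ W(C_0, Y)`, then for every relatively compact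
neighborhood `U` of the identity the `U`-oscillation `G₀^#_U` belongs to `W(C_0,Y)`. -/
theorem oscillation_mem_WC0Y
    {G : Type*} [Group G] [TopologicalSpace G] [IsTopologicalGroup G]
    [LocallyCompactSpace G] [T2Space G] [MeasurableSpace G] [BorelSpace G]
    {p : ℝ} (hp0 : 0 < p) (hp1 : p ≤ 1)
    (Y : SolidQB G p) (Q : Set G) (hQ : RelCptNbhd Q)
    (hL : LeftInvW Y Q) (hR : RightInvW Y Q)
    (G₀ : G → ℂ) (hGcont : Continuous G₀)
    (hGW : WMem Y Q G₀)
    (hGinv : WMem Y Q fun z => ((ctrl Q (invol G₀) z⁻¹ : ℝ) : ℂ))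
    (U : Set G) (hU : RelCptNbhd U) :
    Continuous (osc U G₀) ∧ WMem Y Q fun z => ((osc U G₀ z : ℝ) : ℂ) := by
  classical
  obtain ⟨hQn, hQc⟩ := hQ
  obtain ⟨hUn, hUc⟩ := hU
  have hQ1 : (1 : G) ∈ Q := mem_of_mem_nhds hQn
  have hU1 : (1 : G) ∈ U := mem_of_mem_nhds hUn
  have hIG : Continuous (invol G₀) := hGcont.comp continuous_inv
  -- continuity of the oscillation
  have hfc : Continuous (Function.uncurry fun x u => ‖G₀ (u * x) - G₀ x‖) :=
    ((hGcont.comp (continuous_snd.mul continuous_fst)).sub (hGcont.comp continuous_fst)).norm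
  have hosc_eq : osc U G₀ = fun x => sSup ((fun u => ‖G₀ (u * x) - G₀ x‖) '' closure U) := by
    funext x
    have h1 : osc U G₀ x = sSup ((fun u => ‖G₀ (u * x) - G₀ x‖) '' U) := by
      rw [Set.image_eq_range]; rfl
    rw [h1]
    set f : G → ℝ := fun u => ‖G₀ (u * x) - G₀ x‖ with hf
    have hfc' : Continuous f := ((hGcont.comp (continuous_mul_right x)).sub continuous_const).norm
    have hbdd : BddAbove (f '' closure U) := hUc.bddAbove_image hfc'.continuousOn
    apply le_antisymm
    · exact csSup_le_csSup hbdd ⟨f 1, Set.mem_image_of_mem f hU1⟩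
        (Set.image_mono subset_closure)
    · refine csSup_le ⟨f 1, Set.mem_image_of_mem f (subset_closure hU1)⟩ ?_
      rintro v ⟨u, hu, rfl⟩
      have h2 : f u ∈ closure (f '' U) :=
        image_closure_subset_closure_image hfc' (Set.mem_image_of_mem f hu)
      have hUB : closure (f '' U) ⊆ Set.Iic (sSup (f '' U)) :=
        closure_minimal (fun y hy =>
          le_csSup (hbdd.mono (Set.image_mono subset_closure)) hy) isClosed_Iic
      exact hUB h2
  have hcont : Continuous (osc U G₀) := by
    rw [hosc_eq]
    exact hUc.continuous_sSup hfc
  refine ⟨hcont, ?_⟩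
  -- set up the cover of `closure U` by sets `(interior Q)⁻¹ * a`
  have hW1 : (1 : G) ∈ (interior Q)⁻¹ := by
    simpa using mem_interior_iff_mem_nhds.2 hQn
  obtain ⟨t, htU, htcov⟩ := hUc.elim_nhds_subcover
    (fun a => (fun g => g * a⁻¹) ⁻¹' (interior Q)⁻¹)
    (fun a _ => (isOpen_interior.inv.preimage (continuous_mul_right a⁻¹)).mem_nhds
      (by simp [hW1]))
  set Mc : G → ℂ := fun z => ((ctrl Q (invol G₀) z⁻¹ : ℝ) : ℂ) with hMc
  -- each left translate of the control function of `Mc` lies in `Y`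
  have hmemA : ∀ a : G, Y.Mem fun x => ((ctrl Q Mc (a * x) : ℝ) : ℂ) := by
    intro a
    obtain ⟨C, hC0, hCb⟩ := hL a⁻¹
    have h1 : Y.Mem fun x => ((ctrl Q (Ltrans a⁻¹ Mc) x : ℝ) : ℂ) := (hCb Mc hGinv).1
    have heq : (fun x => ((ctrl Q (Ltrans a⁻¹ Mc) x : ℝ) : ℂ))
        = fun x => ((ctrl Q Mc (a * x) : ℝ) : ℂ) := by
      funext x
      congr 1
      unfold ctrl Ltrans
      simp [mul_assoc]
    rw [heq] at h1
    exact h1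
  set Sr : G → ℝ := fun x => ∑ a ∈ t, ctrl Q Mc (a * x) with hSr
  have hSr0 : ∀ x, 0 ≤ Sr x := fun x => Finset.sum_nonneg fun _ _ => ctrl_nonneg _ _ _
  have hmemS : Y.Mem fun x => ((Sr x : ℝ) : ℂ) := by
    have key : ∀ s : Finset G, Y.Mem fun x => ((∑ a ∈ s, ctrl Q Mc (a * x) : ℝ) : ℂ) := by
      intro s
      induction s using Finset.induction_on with
      | empty =>
        have := Y.zero_mem
        convert this using 1
        funext x; simp
      | @insert a s ha ih =>
        have h2 := Y.add_mem _ _ (hmemA a) ih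
        convert h2 using 1
        funext x
        simp [Finset.sum_insert ha, Pi.add_apply]
    exact key t
  have htot := Y.add_mem _ _ hmemS hGW
  -- the core pointwise estimate
  have hcore : ∀ x, ctrl Q (fun z => ((osc U G₀ z : ℝ) : ℂ)) x ≤ Sr x + ctrl Q G₀ x := by
    intro x
    refine Real.iSup_le (fun q => ?_) (add_nonneg (hSr0 x) (ctrl_nonneg _ _ _))
    rw [Complex.norm_real, Real.norm_eq_abs, abs_of_nonneg (osc_nonneg _ _ _)]
    refine Real.iSup_le (fun u => ?_) (add_nonneg (hSr0 x) (ctrl_nonneg _ _ _))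
    have h2 : ‖G₀ (x * (q : G))‖ ≤ ctrl Q G₀ x :=
      le_ciSup (bddAbove_ctrl_range hQc hGcont x) q
    have h1 : ‖G₀ ((u : G) * (x * (q : G)))‖ ≤ Sr x := by
      obtain ⟨a, ha⟩ := Set.mem_iUnion₂.1 (htcov (subset_closure u.2))
      obtain ⟨hat, hua⟩ := ha
      have hq'Q : a * (u : G)⁻¹ ∈ Q := by
        have : ((u : G) * a⁻¹)⁻¹ ∈ interior Q := Set.mem_inv.1 hua
        simpa [mul_inv_rev] using interior_subset this
      have hrw : (u : G) * (x * (q : G)) = (a * (u : G)⁻¹)⁻¹ * (a * (x * (q : G))) := by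
        simp [mul_inv_rev, mul_assoc]
      have step1 : ‖G₀ ((u : G) * (x * (q : G)))‖
          ≤ ctrl Q (invol G₀) ((a * (x * (q : G))))⁻¹ := by
        have harg : invol G₀ ((a * (x * (q : G)))⁻¹ * (a * (u : G)⁻¹))
            = G₀ ((a * (u : G)⁻¹)⁻¹ * (a * (x * (q : G)))) := by
          simp [invol, mul_inv_rev, mul_assoc]
        have hle := le_ciSup (bddAbove_ctrl_range hQc hIG ((a * (x * (q : G)))⁻¹))
          (⟨a * (u : G)⁻¹, hq'Q⟩ : Q)
        rw [hrw]
        calc ‖G₀ ((a * (u : G)⁻¹)⁻¹ * (a * (x * (q : G))))‖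
            = ‖invol G₀ ((a * (x * (q : G)))⁻¹ * (a * (u : G)⁻¹))‖ := by rw [harg]
          _ ≤ ctrl Q (invol G₀) ((a * (x * (q : G))))⁻¹ := hle
      have step2 : ctrl Q (invol G₀) ((a * (x * (q : G))))⁻¹ ≤ ctrl Q Mc (a * x) := by
        have hle := le_ciSup (bddAbove_ctrl_inv_range hQc hQ1 hGcont (a * x)) q
        have : ‖((ctrl Q (invol G₀) ((a * x * (q : G)))⁻¹ : ℝ) : ℂ)‖
            = ctrl Q (invol G₀) ((a * x * (q : G)))⁻¹ := by
          rw [Complex.norm_real, Real.norm_eq_abs, abs_of_nonneg (ctrl_nonneg _ _ _)]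
        calc ctrl Q (invol G₀) ((a * (x * (q : G))))⁻¹
            = ‖Mc (a * x * (q : G))‖ := by
              rw [hMc]
              rw [Complex.norm_real, Real.norm_eq_abs, abs_of_nonneg (ctrl_nonneg _ _ _)]
              rw [mul_assoc]
          _ ≤ ctrl Q Mc (a * x) := by
              have hb := bddAbove_ctrl_inv_range hQc hQ1 hGcont (a * x)
              have : (fun r : Q => ‖((ctrl Q (invol G₀) ((a * x * (r : G)))⁻¹ : ℝ) : ℂ)‖)
                  = fun r : Q => ‖Mc ((a * x) * (r : G))‖ := rfl
              rw [this] at hb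
              exact le_ciSup hb q
      have step3 : ctrl Q Mc (a * x) ≤ Sr x :=
        Finset.single_le_sum (fun a' _ => ctrl_nonneg Q Mc (a' * x)) hat
      exact step1.trans (step2.trans step3)
    calc ‖G₀ ((u : G) * (x * (q : G))) - G₀ (x * (q : G))‖
        ≤ ‖G₀ ((u : G) * (x * (q : G)))‖ + ‖G₀ (x * (q : G))‖ := norm_sub_le _ _
      _ ≤ Sr x + ctrl Q G₀ x := add_le_add h1 h2
  -- conclude by solidity
  have hsolid := Y.solid _ (fun x => ((ctrl Q (fun z => ((osc U G₀ z : ℝ) : ℂ)) x : ℝ) : ℂ))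
    htot ?_
  · exact hsolid.1
  · intro x
    have hR1 : ((fun x => ((Sr x : ℝ) : ℂ)) + fun x => ((ctrl Q G₀ x : ℝ) : ℂ)) x
        = ((Sr x + ctrl Q G₀ x : ℝ) : ℂ) := by push_cast [Pi.add_apply]; ring
    rw [hR1, Complex.norm_real, Complex.norm_real, Real.norm_eq_abs, Real.norm_eq_abs,
      abs_of_nonneg (ctrl_nonneg _ _ _),
      abs_of_nonneg (add_nonneg (hSr0 x) (ctrl_nonneg _ _ _))]
    exact hcore x


end CoorbitQB
end
end

section
/- Let G be a locally compact group, w a submultiplicative weight on G, and 0<p<∞. If G: G→ℂ is continuous with G ∈ W(C_0,L^p_w) and K(G^∨,Q,L^∞)^∨ ∈ W(L^∞,L^p_w) (i.e. G ∈ W(C_0,W(L^∞,L^p_w)^∨)^∨), then ‖G^#_U|W(L^∞,L^p_w)‖ → 0 as U shrinks to {e}; that is, for every ε>0 there exists a neighborhood U₁ of e such that ‖G^#_U|W(L^∞,L^p_w)‖ ≤ ε for every relatively compact neighborhood U of e contained in U₁. -/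
/- Common setup for coorbit space theory on locally compact groups,
following Rauhut, "Coorbit space theory for quasi-Banach spaces". -/

noncomputable section
open Classical MeasureTheory Filter Topology
open scoped ENNReal NNReal BigOperators Pointwise

namespace CoorbitQB

variable {G : Type*} [Group G] [TopologicalSpace G] [IsTopologicalGroup G]
  [LocallyCompactSpace G] [T2Space G] [MeasurableSpace G] [BorelSpace G]

variable {p : ℝ}

variable {H : Type*} [NormedAddCommGroup H] [InnerProductSpace ℂ H] [CompleteSpace H]

namespace CoorbitQBAux

/-- Supremum of a locally uniformly bounded family of lower semicontinuous
nonnegative functions is lower semicontinuous. -/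
lemma real_iSup_lsc {X : Type*} [TopologicalSpace X] {ι : Sort*} {T : ι → X → ℝ}
    (hT : ∀ i, LowerSemicontinuous (T i))
    (hb : ∀ x : X, ∃ V ∈ 𝓝 x, ∃ M : ℝ, ∀ i, ∀ y ∈ V, T i y ≤ M) :
    LowerSemicontinuous fun x => ⨆ i, T i x := by
  intro x y hy
  obtain ⟨V, hV, M, hM⟩ := hb x
  rcases isEmpty_or_nonempty ι with h | h
  · have h0 : (fun x : X => ⨆ i, T i x) = fun _ => (0 : ℝ) := funext fun z => Real.iSup_of_isEmpty _
    rw [h0] at hy ⊢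
    exact Filter.Eventually.of_forall fun z => hy
  · obtain ⟨i, hi⟩ := exists_lt_of_lt_ciSup hy
    filter_upwards [hT i x y hi, hV] with z hz hzV
    refine lt_of_lt_of_le hz (le_ciSup (f := fun j => T j z) ⟨M, ?_⟩ i)
    rintro _ ⟨j, rfl⟩; exact hM j z hzV

lemma lsc_comp_continuous {X Y : Type*} [TopologicalSpace X] [TopologicalSpace Y]
    {g : Y → ℝ} (hg : LowerSemicontinuous g) {h : X → Y} (hh : Continuous h) :
    LowerSemicontinuous fun x => g (h x) := by
  intro x y hy
  exact (hh.tendsto x).eventually (hg (h x) y hy)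

/-- Uniform smallness of left oscillation of a continuous function on a compact set. -/
lemma exists_nhds_uniform_small {G : Type*} [Group G] [TopologicalSpace G] [IsTopologicalGroup G]
    {F : G → ℂ} (hF : Continuous F) {C : Set G} (hC : IsCompact C) {η : ℝ} (hη : 0 < η) :
    ∃ U ∈ 𝓝 (1 : G), ∀ u ∈ U, ∀ z ∈ C, ‖F (u * z) - F z‖ ≤ η := by
  have hcont : Continuous fun p : G × G => ‖F (p.1 * p.2) - F p.2‖ := by fun_prop
  have hO : IsOpen {p : G × G | ‖F (p.1 * p.2) - F p.2‖ < η} :=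
    isOpen_lt hcont continuous_const
  have hsub : ({1} : Set G) ×ˢ C ⊆ {p : G × G | ‖F (p.1 * p.2) - F p.2‖ < η} := by
    rintro ⟨u, z⟩ ⟨hu, hz⟩
    simp only [Set.mem_singleton_iff] at hu
    subst hu
    simpa using hη
  obtain ⟨u, v, hu, _, h1u, hCv, huv⟩ :=
    generalized_tube_lemma isCompact_singleton hC hO hsub
  refine ⟨u, hu.mem_nhds (h1u (Set.mem_singleton 1)), fun a ha z hz => ?_⟩
  have hmem : (a, z) ∈ u ×ˢ v := Set.mk_mem_prod ha (hCv hz)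
  have h2 := huv hmem
  simp only [Set.mem_setOf_eq] at h2
  exact h2.le

/-- Quantitative absolute continuity for lintegrals. -/
lemma exists_small_setLIntegral {α : Type*} [MeasurableSpace α] {μ : Measure α}
    {g : α → ℝ≥0∞} (hg : Measurable g) (hI : ∫⁻ x, g x ∂μ ≠ ∞) {β : ℝ≥0∞} (hβ : β ≠ 0) :
    ∃ η : ℝ≥0∞, η ≠ 0 ∧ ∀ t : Set α, MeasurableSet t → μ t < η → ∫⁻ x in t, g x ∂μ ≤ β := by
  set T : ℕ → Set α := fun c => {x | (c : ℝ≥0∞) < g x} with hT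
  have hTm : ∀ c, MeasurableSet (T c) := fun c => measurableSet_lt measurable_const hg
  have hTanti : Antitone T := by
    intro a b hab x hx
    simp only [hT, Set.mem_setOf_eq] at hx ⊢
    exact lt_of_le_of_lt (by exact_mod_cast hab) hx
  have hβ2 : (0 : ℝ≥0∞) < β / 2 := ENNReal.div_pos hβ ENNReal.ofNat_ne_top
  have hInter : ⋂ c, T c = {x | g x = ∞} := by
    ext x
    simp only [Set.mem_iInter, Set.mem_setOf_eq, hT]
    constructor
    · intro h
      by_contra hne
      obtain ⟨n, hn⟩ := ENNReal.exists_nat_gt hne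
      exact absurd (h n) (not_lt.2 hn.le)
    · intro h n
      rw [h]
      exact lt_top_iff_ne_top.2 (ENNReal.natCast_ne_top n)
  have hmeas_top : MeasurableSet {x | g x = ∞} := hg (measurableSet_singleton ∞)
  have hnull : μ {x | g x = ∞} = 0 := by
    have h' := MeasureTheory.ae_lt_top hg hI
    rw [MeasureTheory.ae_iff] at h'
    refine measure_mono_null (fun x hx => ?_) h'
    simp only [Set.mem_setOf_eq] at hx ⊢
    simp [hx]
  have htend : Tendsto (fun c => ∫⁻ x in T c, g x ∂μ) atTop (𝓝 0) := by
    have h1 : (fun c => ∫⁻ x in T c, g x ∂μ) = fun c => μ.withDensity g (T c) := by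
      funext c; exact (withDensity_apply g (hTm c)).symm
    rw [h1]
    have hfin : μ.withDensity g (T 0) ≠ ∞ := by
      refine ne_top_of_le_ne_top ?_ (measure_mono (Set.subset_univ _))
      rw [withDensity_apply g MeasurableSet.univ, Measure.restrict_univ]
      exact hI
    have h2 := tendsto_measure_iInter_atTop (μ := μ.withDensity g)
      (fun c => (hTm c).nullMeasurableSet) hTanti ⟨0, hfin⟩
    rw [hInter] at h2
    have h3 : μ.withDensity g {x | g x = ∞} = 0 := by
      rw [withDensity_apply g hmeas_top]
      exact setLIntegral_measure_zero _ _ hnull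
    rw [h3] at h2
    exact h2
  have hβ4 : (0 : ℝ≥0∞) < β / 2 / 2 := ENNReal.div_pos hβ2.ne' ENNReal.ofNat_ne_top
  obtain ⟨c, hc⟩ := (htend.eventually_lt_const hβ4).exists
  have hc1ne : ((c : ℝ≥0∞) + 1) ≠ 0 := by simp
  have hc1nt : ((c : ℝ≥0∞) + 1) ≠ ∞ := by simp
  refine ⟨(β / 2 / 2) / ((c : ℝ≥0∞) + 1), (ENNReal.div_pos hβ4.ne' hc1nt).ne', fun t ht hμt => ?_⟩
  have hptw : ∀ x, g x ≤ (T c).indicator g x + (c : ℝ≥0∞) := by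
    intro x
    by_cases hx : x ∈ T c
    · rw [Set.indicator_of_mem hx]; exact le_add_right le_rfl
    · rw [Set.indicator_of_notMem hx]
      simpa using not_lt.1 hx
  calc ∫⁻ x in t, g x ∂μ
      ≤ ∫⁻ x in t, ((T c).indicator g x + (c : ℝ≥0∞)) ∂μ := lintegral_mono hptw
    _ = ∫⁻ x in t, (T c).indicator g x ∂μ + ∫⁻ _ in t, (c : ℝ≥0∞) ∂μ :=
        lintegral_add_left (hg.indicator (hTm c)) _
    _ ≤ ∫⁻ x, (T c).indicator g x ∂μ + (c : ℝ≥0∞) * μ t := by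
        gcongr
        · exact Measure.restrict_le_self
        · rw [setLIntegral_const]
    _ ≤ β / 2 / 2 + β / 2 / 2 := by
        have hb1 : ∫⁻ x, (T c).indicator g x ∂μ ≤ β / 2 / 2 := by
          rw [lintegral_indicator (hTm c)]
          exact hc.le
        have hb2 : (c : ℝ≥0∞) * μ t ≤ β / 2 / 2 := by
          have : (c : ℝ≥0∞) * μ t ≤ ((c : ℝ≥0∞) + 1) * ((β / 2 / 2) / ((c : ℝ≥0∞) + 1)) := by
            exact mul_le_mul' (le_add_right le_rfl) hμt.le
          rw [ENNReal.mul_div_cancel hc1ne hc1nt] at this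
          exact this
        exact add_le_add hb1 hb2
    _ = β / 2 := ENNReal.add_halves _
    _ ≤ β := ENNReal.half_le_self

/-- Tail of a finite lintegral outside a compact set can be made small. -/
lemma exists_compact_tail {α : Type*} [TopologicalSpace α] [T2Space α] [MeasurableSpace α]
    [OpensMeasurableSpace α] {μ : Measure α} [μ.InnerRegularCompactLTTop]
    {g : α → ℝ≥0∞} (hg : AEMeasurable g μ) (hI : ∫⁻ x, g x ∂μ ≠ ∞) {β : ℝ≥0∞} (hβ : β ≠ 0) :
    ∃ K : Set α, IsCompact K ∧ ∫⁻ x in Kᶜ, g x ∂μ ≤ β := by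
  -- replace by a measurable representative
  set g' := hg.mk g with hg'
  have hg'm : Measurable g' := hg.measurable_mk
  have hgg' : g =ᵐ[μ] g' := hg.ae_eq_mk
  have hI' : ∫⁻ x, g' x ∂μ ≠ ∞ := by rwa [← lintegral_congr_ae hgg']
  suffices h : ∃ K : Set α, IsCompact K ∧ ∫⁻ x in Kᶜ, g' x ∂μ ≤ β by
    obtain ⟨K, hK, hKle⟩ := h
    exact ⟨K, hK, by rwa [lintegral_congr_ae (ae_restrict_of_ae hgg')]⟩
  have hβ2 : (β / 2) ≠ 0 := (ENNReal.div_pos hβ ENNReal.ofNat_ne_top).ne'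
  obtain ⟨η, hη0, hηq⟩ := exists_small_setLIntegral hg'm hI' hβ2
  set s : ℕ → Set α := fun n => {x | ((n : ℝ≥0∞) + 1)⁻¹ < g' x} with hs
  have hsm : ∀ n, MeasurableSet (s n) := fun n => measurableSet_lt measurable_const hg'm
  have hsmono : Monotone s := by
    intro a b hab x hx
    simp only [hs, Set.mem_setOf_eq] at hx ⊢
    refine lt_of_le_of_lt (ENNReal.inv_le_inv.2 ?_) hx
    exact add_le_add_left (by exact_mod_cast hab) 1
  have hUnion : ⋃ n, s n = {x | 0 < g' x} := by
    ext x
    simp only [Set.mem_iUnion, hs, Set.mem_setOf_eq]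
    constructor
    · rintro ⟨n, hn⟩; exact lt_of_le_of_lt zero_le hn
    · intro hx
      obtain ⟨n, hn⟩ := ENNReal.exists_inv_nat_lt hx.ne'
      exact ⟨n, lt_of_le_of_lt (ENNReal.inv_le_inv.2 (le_add_right le_rfl)) hn⟩
  have hpos_meas : MeasurableSet {x | 0 < g' x} := measurableSet_lt measurable_const hg'm
  have hcompl0 : ∫⁻ x in {x | 0 < g' x}ᶜ, g' x ∂μ = 0 := by
    have : ∀ᵐ x ∂μ, x ∈ {x | 0 < g' x}ᶜ → g' x = 0 := by
      refine ae_of_all _ fun x hx => ?_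
      simp only [Set.mem_compl_iff, Set.mem_setOf_eq, not_lt, le_zero_iff] at hx
      exact hx
    rw [setLIntegral_congr_fun_ae hpos_meas.compl this]
    simp
  have htot : ∫⁻ x in {x | 0 < g' x}, g' x ∂μ = ∫⁻ x, g' x ∂μ := by
    have := lintegral_add_compl g' hpos_meas (μ := μ)
    rw [hcompl0, add_zero] at this
    exact this
  have hν : Tendsto (fun n => ∫⁻ x in s n, g' x ∂μ) atTop (𝓝 (∫⁻ x, g' x ∂μ)) := by
    have h1 : (fun n => ∫⁻ x in s n, g' x ∂μ) = fun n => μ.withDensity g' (s n) := by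
      funext n; exact (withDensity_apply g' (hsm n)).symm
    rw [h1]
    have h2 := tendsto_measure_iUnion_atTop (μ := μ.withDensity g') hsmono
    rw [hUnion, withDensity_apply g' hpos_meas, htot] at h2
    exact h2
  have hev : ∀ᶠ n in atTop, ∫⁻ x in (s n)ᶜ, g' x ∂μ ≤ β / 2 := by
    rcases le_or_gt (∫⁻ x, g' x ∂μ) (β / 2) with hle | hlt
    · exact Filter.Eventually.of_forall fun n =>
        le_trans (setLIntegral_le_lintegral _ _) hle
    · have hI0 : (∫⁻ x, g' x ∂μ) ≠ 0 := ((pos_iff_ne_zero.2 hβ2).trans hlt).ne'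
      have hsub : (∫⁻ x, g' x ∂μ) - β / 2 < ∫⁻ x, g' x ∂μ :=
        ENNReal.sub_lt_self hI' hI0 hβ2
      filter_upwards [hν.eventually_const_le hsub] with n hn
      have hadd := lintegral_add_compl g' (hsm n) (μ := μ)
      have hsn_ne : (∫⁻ x in s n, g' x ∂μ) ≠ ∞ :=
        ne_top_of_le_ne_top hI' (setLIntegral_le_lintegral _ _)
      have heq : ∫⁻ x in (s n)ᶜ, g' x ∂μ = (∫⁻ x, g' x ∂μ) - ∫⁻ x in s n, g' x ∂μ :=
        ENNReal.eq_sub_of_add_eq hsn_ne (by rwa [add_comm] at hadd)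
      rw [heq]
      calc (∫⁻ x, g' x ∂μ) - ∫⁻ x in s n, g' x ∂μ
          ≤ (∫⁻ x, g' x ∂μ) - ((∫⁻ x, g' x ∂μ) - β / 2) := tsub_le_tsub_left hn _
        _ = β / 2 := ENNReal.sub_sub_cancel hI' hlt.le
  obtain ⟨n, hn⟩ := hev.exists
  have hμs : μ (s n) ≠ ∞ := by
    have h0 := mul_meas_ge_le_lintegral₀ (μ := μ) hg'm.aemeasurable ((n : ℝ≥0∞) + 1)⁻¹
    have h1 : μ (s n) ≤ μ {x | ((n : ℝ≥0∞) + 1)⁻¹ ≤ g' x} := by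
      refine measure_mono fun x hx => ?_
      have hx' : ((n : ℝ≥0∞) + 1)⁻¹ < g' x := hx
      exact hx'.le
    have h2 : ((n : ℝ≥0∞) + 1)⁻¹ * μ (s n) ≤ ∫⁻ x, g' x ∂μ :=
      le_trans (mul_le_mul_right h1 _) h0
    intro hcon
    rw [hcon, ENNReal.mul_top (by simp)] at h2
    exact hI' (top_le_iff.1 h2)
  obtain ⟨K, hKs, hKc, hKd⟩ := (hsm n).exists_isCompact_diff_lt hμs hη0
  refine ⟨K, hKc, ?_⟩
  have hsplit : Kᶜ ⊆ (s n \ K) ∪ (s n)ᶜ := by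
    intro x hx
    by_cases hxs : x ∈ s n
    · exact Or.inl ⟨hxs, hx⟩
    · exact Or.inr hxs
  calc ∫⁻ x in Kᶜ, g' x ∂μ
      ≤ ∫⁻ x in (s n \ K) ∪ (s n)ᶜ, g' x ∂μ := lintegral_mono_set hsplit
    _ = ∫⁻ x in s n \ K, g' x ∂μ + ∫⁻ x in (s n)ᶜ, g' x ∂μ :=
        lintegral_union (hsm n).compl (disjoint_compl_right.mono_left Set.diff_subset)
    _ ≤ β / 2 + β / 2 :=
        add_le_add (hηq _ ((hsm n).diff hKc.isClosed.measurableSet) hKd) hn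
    _ = β := ENNReal.add_halves _

end CoorbitQBAux

/-- **Lemma 3.8(b)** (Rauhut, *Coorbit space theory for quasi-Banach spaces*).
For a submultiplicative weight `w` and `0 < p < ∞`, if
`G₀ ∈ W(C_0, W(L^∞,L^p_w)^∨)^∨ ∩ W(C_0, L^p_w)`, then
`‖G₀^#_U | W(L^∞,L^p_w)‖ → 0` as `U` shrinks to `{e}`. -/
theorem oscillation_norm_tendsto_zero
    {G : Type*} [Group G] [TopologicalSpace G] [IsTopologicalGroup G]
    [LocallyCompactSpace G] [T2Space G] [MeasurableSpace G] [BorelSpace G]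
    (w : G → ℝ) (hw : Submul w) {q : ℝ} (hq : 0 < q)
    (Q : Set G) (hQ : RelCptNbhd Q)
    (G₀ : G → ℂ) (hGcont : Continuous G₀)
    (hGW : WLpwMem w q Q G₀)
    (hGinv : WLpwMem w q Q fun z => ((ctrl Q (invol G₀) z⁻¹ : ℝ) : ℂ)) :
    ∀ ε : ℝ, 0 < ε → ∃ U₁ ∈ 𝓝 (1 : G), ∀ U : Set G, RelCptNbhd U → U ⊆ U₁ →
      WLpwMem w q Q (fun z => ((osc U G₀ z : ℝ) : ℂ)) ∧
      WLpwN w q Q (fun z => ((osc U G₀ z : ℝ) : ℂ)) ≤ ε := by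
  intro ε hε
  obtain ⟨hQnhds, hQcpt⟩ := hQ
  have hQ1 : (1 : G) ∈ Q := mem_of_mem_nhds hQnhds
  obtain ⟨hwc, hwpos, -⟩ := hw
  haveI hIRC : (μG G).InnerRegularCompactLTTop := by unfold μG; infer_instance
  haveI hFMC : IsFiniteMeasureOnCompacts (μG G) := by unfold μG; infer_instance
  set μ : Measure G := μG G with hμdef
  set P : ℝ≥0∞ := ENNReal.ofReal q with hP
  have hP0 : P ≠ 0 := (ENNReal.ofReal_pos.2 hq).ne'
  have hPt : P ≠ ∞ := ENNReal.ofReal_ne_top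
  have hPtr : P.toReal = q := ENNReal.toReal_ofReal hq.le
  have hnrm : ∀ r : ℝ, 0 ≤ r → ‖((r : ℝ) : ℂ)‖ = r := fun r hr => by
    rw [Complex.norm_real, Real.norm_eq_abs, abs_of_nonneg hr]
  have hctrl_nonneg : ∀ (F : G → ℂ) (x : G), 0 ≤ ctrl Q F x :=
    fun F x => Real.iSup_nonneg fun _ => norm_nonneg _
  have hosc_nonneg : ∀ (U : Set G) (x : G), 0 ≤ osc U G₀ x :=
    fun U x => Real.iSup_nonneg fun _ => norm_nonneg _
  set F₀ : G → ℂ := fun z => ((ctrl Q (invol G₀) z⁻¹ : ℝ) : ℂ) with hF₀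
  set Hc : G → ℝ := fun x => ctrl Q F₀ x with hHc
  have hHc_nonneg : ∀ x, 0 ≤ Hc x := fun x => hctrl_nonneg _ x
  set A : G → ℝ := fun x => ‖((Hc x : ℝ) : ℂ)‖ * w x with hA
  have hA_mem : MemLp A P μ := hGinv
  have hA_nonneg : ∀ x, 0 ≤ A x := fun x => mul_nonneg (norm_nonneg _) (hwpos x).le
  have hAeq : ∀ x, A x = Hc x * w x := fun x => by
    simp only [hA]; rw [hnrm _ (hHc_nonneg x)]
  have hinv_cont : Continuous (invol G₀) := by
    have : Continuous fun x : G => G₀ x⁻¹ := hGcont.comp continuous_inv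
    exact this
  have hbdd_gen : ∀ (f : G → ℝ), Continuous f → ∀ (S : Set G), IsCompact (closure S) →
      BddAbove (Set.range fun s : S => f (s : G)) := by
    intro f hf S hS
    obtain ⟨M, hM⟩ := (hS.image hf).bddAbove
    refine ⟨M, ?_⟩
    rintro - ⟨⟨s, hs⟩, rfl⟩
    exact hM ⟨s, subset_closure hs, rfl⟩
  have hbdd_ctrl : ∀ (F : G → ℂ), Continuous F → ∀ y : G,
      BddAbove (Set.range fun r : Q => ‖F (y * (r : G))‖) := by
    intro F hF y
    exact hbdd_gen (fun g => ‖F (y * g)‖) (by fun_prop) Q hQcpt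
  have hinv_term : ∀ (y r : G), invol G₀ (y⁻¹ * r) = G₀ (r⁻¹ * y) := by
    intro y r; simp [invol, mul_inv_rev]
  have hm_eq : ∀ y : G, ‖F₀ y‖ = ctrl Q (invol G₀) y⁻¹ := fun y =>
    hnrm _ (hctrl_nonneg _ _)
  -- uniform bound for the family q' ↦ ‖F₀ (x q')‖
  have hbddF0 : ∀ x : G, BddAbove (Set.range fun q' : Q => ‖F₀ (x * (q' : G))‖) := by
    intro x
    obtain ⟨M, hM⟩ :=
      (((hQcpt.inv.mul ((isCompact_singleton (x := x)).mul hQcpt))).image hGcont.norm).bddAbove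
    have h1c : (1 : G) ∈ closure Q := subset_closure hQ1
    refine ⟨M, ?_⟩
    rintro - ⟨q', rfl⟩
    show ‖F₀ (x * (q' : G))‖ ≤ M
    rw [hm_eq]
    have hM0 : (0 : ℝ) ≤ M := by
      refine le_trans (norm_nonneg (G₀ ((1 : G)⁻¹ * (x * 1)))) (hM ⟨(1:G)⁻¹ * (x * 1), ?_, rfl⟩)
      exact Set.mul_mem_mul (Set.inv_mem_inv.2 h1c) (Set.mul_mem_mul rfl h1c)
    refine Real.iSup_le (fun r => ?_) hM0
    rw [hinv_term]
    refine hM ⟨(r : G)⁻¹ * (x * (q' : G)), ?_, rfl⟩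
    exact Set.mul_mem_mul (Set.inv_mem_inv.2 (subset_closure r.2))
      (Set.mul_mem_mul rfl (subset_closure q'.2))
  -- pointwise domination: for U ⊆ Q⁻¹
  have hdom : ∀ (U : Set G), U ⊆ Q⁻¹ → ∀ x : G,
      ctrl Q (fun z => ((osc U G₀ z : ℝ) : ℂ)) x ≤ 2 * Hc x := by
    intro U hU x
    have h2 : (0 : ℝ) ≤ 2 * Hc x := mul_nonneg (by norm_num) (hHc_nonneg x)
    refine Real.iSup_le (fun q' => ?_) h2
    rw [hnrm _ (hosc_nonneg _ _)]
    have hm_le : ‖F₀ (x * (q' : G))‖ ≤ Hc x :=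
      le_ciSup (f := fun q'' : Q => ‖F₀ (x * (q'' : G))‖) (hbddF0 x) q'
    set y : G := x * (q' : G) with hy
    have hbdd_inner : BddAbove (Set.range fun r : Q => ‖invol G₀ (y⁻¹ * (r : G))‖) :=
      hbdd_ctrl (invol G₀) hinv_cont y⁻¹
    have hterm : ∀ u : U, ‖G₀ ((u : G) * y) - G₀ y‖ ≤ 2 * ‖F₀ y‖ := by
      intro u
      have h1 : ‖G₀ ((u : G) * y)‖ ≤ ctrl Q (invol G₀) y⁻¹ := by
        have hu' : ((u : G))⁻¹ ∈ Q := by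
          have h := hU u.2
          rwa [Set.mem_inv] at h
        have h2' := le_ciSup (f := fun r : Q => ‖invol G₀ (y⁻¹ * (r : G))‖)
          hbdd_inner ⟨(u : G)⁻¹, hu'⟩
        rw [hinv_term y ((u : G))⁻¹, inv_inv] at h2'
        exact h2'
      have h1b : ‖G₀ y‖ ≤ ctrl Q (invol G₀) y⁻¹ := by
        have h2' := le_ciSup (f := fun r : Q => ‖invol G₀ (y⁻¹ * (r : G))‖)
          hbdd_inner ⟨(1 : G), hQ1⟩
        rw [hinv_term y 1, inv_one, one_mul] at h2'
        exact h2'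
      calc ‖G₀ ((u : G) * y) - G₀ y‖ ≤ ‖G₀ ((u : G) * y)‖ + ‖G₀ y‖ := norm_sub_le _ _
        _ ≤ ctrl Q (invol G₀) y⁻¹ + ctrl Q (invol G₀) y⁻¹ := add_le_add h1 h1b
        _ = 2 * ‖F₀ y‖ := by rw [hm_eq]; ring
    have hosc_le : osc U G₀ y ≤ 2 * ‖F₀ y‖ :=
      Real.iSup_le hterm (mul_nonneg (by norm_num) (norm_nonneg _))
    exact le_trans hosc_le (mul_le_mul_of_nonneg_left hm_le (by norm_num))
  -- measurability of the controlled oscillation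
  have hmeasf : ∀ (U : Set G), IsCompact (closure U) →
      Measurable fun x => ctrl Q (fun z => ((osc U G₀ z : ℝ) : ℂ)) x := by
    intro U hUc
    have hosc_lsc : LowerSemicontinuous (osc U G₀) := by
      have h1 : LowerSemicontinuous fun x : G => ⨆ u : U, ‖G₀ ((u : G) * x) - G₀ x‖ := by
        refine CoorbitQBAux.real_iSup_lsc (fun u => Continuous.lowerSemicontinuous (by fun_prop)) ?_
        intro x
        obtain ⟨V, hVc, hVn⟩ := exists_compact_mem_nhds x
        obtain ⟨M, hM⟩ := (((hUc.mul hVc).union hVc).image hGcont.norm).bddAbove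
        refine ⟨V, hVn, 2 * M, fun u y hy => ?_⟩
        have hb1 : ‖G₀ ((u : G) * y)‖ ≤ M :=
          hM ⟨(u : G) * y, Or.inl (Set.mul_mem_mul (subset_closure u.2) hy), rfl⟩
        have hb2 : ‖G₀ y‖ ≤ M := hM ⟨y, Or.inr hy, rfl⟩
        calc ‖G₀ ((u : G) * y) - G₀ y‖ ≤ ‖G₀ ((u : G) * y)‖ + ‖G₀ y‖ := norm_sub_le _ _
          _ ≤ 2 * M := by linarith
      exact h1
    have hT2 : ∀ q' : Q, LowerSemicontinuous fun x : G => osc U G₀ (x * (q' : G)) :=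
      fun q' => CoorbitQBAux.lsc_comp_continuous hosc_lsc (by fun_prop)
    have hmain : LowerSemicontinuous fun x : G =>
        ⨆ q' : Q, ‖((osc U G₀ (x * (q' : G)) : ℝ) : ℂ)‖ := by
      have heq : (fun x : G => ⨆ q' : Q, ‖((osc U G₀ (x * (q' : G)) : ℝ) : ℂ)‖)
          = fun x : G => ⨆ q' : Q, osc U G₀ (x * (q' : G)) := by
        funext x
        exact iSup_congr fun q' => hnrm _ (hosc_nonneg _ _)
      rw [heq]
      refine CoorbitQBAux.real_iSup_lsc hT2 ?_
      intro x
      obtain ⟨V, hVc, hVn⟩ := exists_compact_mem_nhds x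
      obtain ⟨M, hM⟩ :=
        (((hUc.mul (hVc.mul hQcpt)).union (hVc.mul hQcpt)).image hGcont.norm).bddAbove
      have hM0 : (0 : ℝ) ≤ M := by
        refine le_trans (norm_nonneg (G₀ (x * (1 : G)))) (hM ⟨x * (1 : G), ?_, rfl⟩)
        exact Or.inr (Set.mul_mem_mul (mem_of_mem_nhds hVn) (subset_closure hQ1))
      refine ⟨V, hVn, 2 * M, fun q' y hy => ?_⟩
      have hyq : y * (q' : G) ∈ V * closure Q := Set.mul_mem_mul hy (subset_closure q'.2)
      refine Real.iSup_le (fun u => ?_) (by linarith)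
      have hb1 : ‖G₀ ((u : G) * (y * (q' : G)))‖ ≤ M :=
        hM ⟨(u : G) * (y * (q' : G)), Or.inl (Set.mul_mem_mul (subset_closure u.2) hyq), rfl⟩
      have hb2 : ‖G₀ (y * (q' : G))‖ ≤ M := hM ⟨y * (q' : G), Or.inr hyq, rfl⟩
      calc ‖G₀ ((u : G) * (y * (q' : G))) - G₀ (y * (q' : G))‖
          ≤ ‖G₀ ((u : G) * (y * (q' : G)))‖ + ‖G₀ (y * (q' : G))‖ := norm_sub_le _ _
        _ ≤ 2 * M := by linarith
    exact hmain.measurable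
  -- tail estimate data
  set g : G → ℝ≥0∞ := fun x => (‖A x‖₊ : ℝ≥0∞) ^ q with hgdef
  have hgae : AEMeasurable g μ :=
    ENNReal.continuous_rpow_const.measurable.comp_aemeasurable
      hA_mem.aestronglyMeasurable.enorm
  have hgint : ∫⁻ x, g x ∂μ ≠ ∞ := by
    have h1 := hA_mem.2
    rw [eLpNorm_eq_lintegral_rpow_enorm_toReal hP0 hPt, hPtr] at h1
    simp only [enorm_eq_nnnorm] at h1
    have h2 : ∫⁻ x, (‖A x‖₊ : ℝ≥0∞) ^ q ∂μ ≠ ∞ := by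
      intro hcon
      rw [hcon, ENNReal.top_rpow_of_pos (by positivity : (0:ℝ) < 1 / q)] at h1
      exact lt_irrefl _ h1
    exact h2
  set εE : ℝ≥0∞ := ENNReal.ofReal ε with hεE
  have hεE0 : εE ≠ 0 := (ENNReal.ofReal_pos.2 hε).ne'
  have hεEt : εE ≠ ∞ := ENNReal.ofReal_ne_top
  have h2q0 : ((2 : ℝ≥0∞) ^ q) ≠ 0 := (ENNReal.rpow_pos (by norm_num) ENNReal.ofNat_ne_top).ne'
  have h2qt : ((2 : ℝ≥0∞) ^ q) ≠ ∞ := ENNReal.rpow_ne_top_of_nonneg hq.le ENNReal.ofNat_ne_top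
  have hεq0 : (εE ^ q) ≠ 0 := (ENNReal.rpow_pos (pos_iff_ne_zero.2 hεE0) hεEt).ne'
  have hεqt : (εE ^ q) ≠ ∞ := ENNReal.rpow_ne_top_of_nonneg hq.le hεEt
  have hβ0 : (εE ^ q / 2) / ((2 : ℝ≥0∞) ^ q) ≠ 0 :=
    (ENNReal.div_pos (ENNReal.div_pos hεq0 ENNReal.ofNat_ne_top).ne' h2qt).ne'
  obtain ⟨K, hKcpt, hKtail⟩ := CoorbitQBAux.exists_compact_tail hgae hgint hβ0
  -- weight integral over K
  set WK : ℝ≥0∞ := ∫⁻ x in K, (ENNReal.ofReal (w x)) ^ q ∂μ with hWKdef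
  have hWKt : WK ≠ ∞ := by
    obtain ⟨Mw, hMw⟩ := (hKcpt.image hwc).bddAbove
    have hle : ∀ x ∈ K, (ENNReal.ofReal (w x)) ^ q ≤ (ENNReal.ofReal Mw) ^ q := fun x hx =>
      ENNReal.rpow_le_rpow (ENNReal.ofReal_le_ofReal (hMw ⟨x, hx, rfl⟩)) hq.le
    have h1 : WK ≤ (ENNReal.ofReal Mw) ^ q * μ K := by
      rw [hWKdef]
      calc ∫⁻ x in K, (ENNReal.ofReal (w x)) ^ q ∂μ
          ≤ ∫⁻ _ in K, (ENNReal.ofReal Mw) ^ q ∂μ := setLIntegral_mono measurable_const hle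
        _ = (ENNReal.ofReal Mw) ^ q * μ K := setLIntegral_const _ _
    exact ne_top_of_le_ne_top
      (ENNReal.mul_ne_top (ENNReal.rpow_ne_top_of_nonneg hq.le ENNReal.ofReal_ne_top)
        hKcpt.measure_lt_top.ne) h1
  have hWK1 : WK + 1 ≠ ∞ := ENNReal.add_ne_top.2 ⟨hWKt, ENNReal.one_ne_top⟩
  have hBpos : (0 : ℝ≥0∞) < (εE ^ q / 2) / (WK + 1) :=
    ENNReal.div_pos (ENNReal.div_pos hεq0 ENNReal.ofNat_ne_top).ne' hWK1
  obtain ⟨b, hb0, hbB⟩ := exists_between hBpos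
  have hbt : b ≠ ∞ := (lt_of_lt_of_le hbB le_top).ne
  set η' : ℝ := (b.toReal) ^ (1 / q) with hη'def
  have hbtr : 0 < b.toReal := ENNReal.toReal_pos hb0.ne' hbt
  have hη'pos : 0 < η' := Real.rpow_pos_of_pos hbtr _
  have hη'q : ENNReal.ofReal (η' ^ q) = b := by
    rw [hη'def, ← Real.rpow_mul hbtr.le, one_div_mul_cancel hq.ne', Real.rpow_one,
      ENNReal.ofReal_toReal hbt]
  -- uniform continuity neighborhood
  obtain ⟨U₂, hU₂n, hU₂⟩ :=
    CoorbitQBAux.exists_nhds_uniform_small hGcont (hKcpt.mul hQcpt) hη'pos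
  have hQinv_nhds : Q⁻¹ ∈ 𝓝 (1 : G) := inv_mem_nhds_one G hQnhds
  refine ⟨U₂ ∩ Q⁻¹, Filter.inter_mem hU₂n hQinv_nhds, ?_⟩
  intro U hU hUsub
  obtain ⟨hUn, hUc⟩ := hU
  set fR : G → ℝ := fun x => ctrl Q (fun z => ((osc U G₀ z : ℝ) : ℂ)) x with hfRdef
  have hfRmeas : Measurable fR := hmeasf U hUc
  have hfRnonneg : ∀ x, 0 ≤ fR x := fun x => hctrl_nonneg _ _
  have hdomU : ∀ x, fR x ≤ 2 * Hc x :=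
    hdom U (hUsub.trans Set.inter_subset_right)
  have hmemF : MemLp (fun x => ‖((fR x : ℝ) : ℂ)‖ * w x) P μ := by
    refine MemLp.of_le (hA_mem.const_mul 2) ?_ ?_
    · exact ((Complex.measurable_ofReal.comp hfRmeas).norm.mul hwc.measurable).aestronglyMeasurable
    · refine ae_of_all _ fun x => ?_
      have hL : ‖((fR x : ℝ) : ℂ)‖ * w x = fR x * w x := by rw [hnrm _ (hfRnonneg x)]
      rw [Real.norm_eq_abs, Real.norm_eq_abs, hL,
        abs_of_nonneg (mul_nonneg (hfRnonneg x) (hwpos x).le),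
        abs_of_nonneg (mul_nonneg (by norm_num : (0:ℝ) ≤ 2) (hA_nonneg x))]
      calc fR x * w x ≤ (2 * Hc x) * w x :=
            mul_le_mul_of_nonneg_right (hdomU x) (hwpos x).le
        _ = 2 * A x := by rw [hAeq x]; ring
  have h_ennf : ∀ x : G, ((‖(‖((fR x : ℝ) : ℂ)‖ * w x)‖₊ : ℝ≥0∞)) = ENNReal.ofReal (fR x * w x) := by
    intro x
    rw [← enorm_eq_nnnorm, Real.enorm_eq_ofReal (mul_nonneg (norm_nonneg _) (hwpos x).le),
      hnrm _ (hfRnonneg x)]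
  have hennA : ∀ x : G, (‖A x‖₊ : ℝ≥0∞) = ENNReal.ofReal (A x) := fun x =>
    Real.enorm_eq_ofReal (hA_nonneg x)
  -- the K-side bound
  have hfRK : ∀ x ∈ K, fR x ≤ η' := by
    intro x hx
    refine Real.iSup_le (fun q' => ?_) hη'pos.le
    rw [hnrm _ (hosc_nonneg _ _)]
    refine Real.iSup_le (fun u => ?_) hη'pos.le
    exact hU₂ (u : G) (hUsub u.2).1 (x * (q' : G))
      (Set.mul_mem_mul hx (subset_closure q'.2))
  have hK_side : ∫⁻ x in K, (‖(‖((fR x : ℝ) : ℂ)‖ * w x)‖₊ : ℝ≥0∞) ^ q ∂μ ≤ εE ^ q / 2 := by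
    have hb1 : ∫⁻ x in K, (‖(‖((fR x : ℝ) : ℂ)‖ * w x)‖₊ : ℝ≥0∞) ^ q ∂μ
        ≤ ∫⁻ x in K, (ENNReal.ofReal η') ^ q * (ENNReal.ofReal (w x)) ^ q ∂μ := by
      refine setLIntegral_mono (by fun_prop) fun x hx => ?_
      rw [h_ennf x]
      calc (ENNReal.ofReal (fR x * w x)) ^ q
          ≤ (ENNReal.ofReal (η' * w x)) ^ q :=
            ENNReal.rpow_le_rpow (ENNReal.ofReal_le_ofReal
              (mul_le_mul_of_nonneg_right (hfRK x hx) (hwpos x).le)) hq.le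
        _ = (ENNReal.ofReal η') ^ q * (ENNReal.ofReal (w x)) ^ q := by
            rw [ENNReal.ofReal_mul hη'pos.le, ENNReal.mul_rpow_of_nonneg _ _ hq.le]
    have hb2 : ∫⁻ x in K, (ENNReal.ofReal η') ^ q * (ENNReal.ofReal (w x)) ^ q ∂μ
        = (ENNReal.ofReal η') ^ q * WK := by
      rw [hWKdef]
      exact lintegral_const_mul' _ _ (ENNReal.rpow_ne_top_of_nonneg hq.le ENNReal.ofReal_ne_top)
    have hb3 : (ENNReal.ofReal η') ^ q = b := by
      rw [ENNReal.ofReal_rpow_of_nonneg hη'pos.le hq.le]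
      exact hη'q
    calc ∫⁻ x in K, (‖(‖((fR x : ℝ) : ℂ)‖ * w x)‖₊ : ℝ≥0∞) ^ q ∂μ
        ≤ (ENNReal.ofReal η') ^ q * WK := by rw [← hb2]; exact hb1
      _ = b * WK := by rw [hb3]
      _ ≤ ((εE ^ q / 2) / (WK + 1)) * (WK + 1) :=
          mul_le_mul' hbB.le (le_add_right le_rfl)
      _ = εE ^ q / 2 := ENNReal.div_mul_cancel (by simp) hWK1
  have hKc_side : ∫⁻ x in Kᶜ, (‖(‖((fR x : ℝ) : ℂ)‖ * w x)‖₊ : ℝ≥0∞) ^ q ∂μ ≤ εE ^ q / 2 := by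
    have hb1 : ∫⁻ x in Kᶜ, (‖(‖((fR x : ℝ) : ℂ)‖ * w x)‖₊ : ℝ≥0∞) ^ q ∂μ
        ≤ ∫⁻ x in Kᶜ, (2 : ℝ≥0∞) ^ q * g x ∂μ := by
      refine lintegral_mono fun x => ?_
      rw [h_ennf x, hgdef]
      have h1 : ENNReal.ofReal (fR x * w x) ≤ 2 * ENNReal.ofReal (A x) := by
        have h2 : fR x * w x ≤ 2 * A x := by
          calc fR x * w x ≤ (2 * Hc x) * w x :=
              mul_le_mul_of_nonneg_right (hdomU x) (hwpos x).le
            _ = 2 * A x := by rw [hAeq x]; ring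
        calc ENNReal.ofReal (fR x * w x) ≤ ENNReal.ofReal (2 * A x) :=
            ENNReal.ofReal_le_ofReal h2
          _ = 2 * ENNReal.ofReal (A x) := by
            rw [ENNReal.ofReal_mul (by norm_num : (0:ℝ) ≤ 2)]
            norm_num
      calc (ENNReal.ofReal (fR x * w x)) ^ q
          ≤ (2 * ENNReal.ofReal (A x)) ^ q := ENNReal.rpow_le_rpow h1 hq.le
        _ = (2 : ℝ≥0∞) ^ q * (ENNReal.ofReal (A x)) ^ q :=
            ENNReal.mul_rpow_of_nonneg _ _ hq.le
        _ = (2 : ℝ≥0∞) ^ q * (‖A x‖₊ : ℝ≥0∞) ^ q := by rw [hennA x]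
    have hb2 : ∫⁻ x in Kᶜ, (2 : ℝ≥0∞) ^ q * g x ∂μ
        = (2 : ℝ≥0∞) ^ q * ∫⁻ x in Kᶜ, g x ∂μ :=
      lintegral_const_mul' _ _ h2qt
    calc ∫⁻ x in Kᶜ, (‖(‖((fR x : ℝ) : ℂ)‖ * w x)‖₊ : ℝ≥0∞) ^ q ∂μ
        ≤ (2 : ℝ≥0∞) ^ q * ∫⁻ x in Kᶜ, g x ∂μ := by rw [← hb2]; exact hb1
      _ ≤ (2 : ℝ≥0∞) ^ q * ((εE ^ q / 2) / ((2 : ℝ≥0∞) ^ q)) := mul_le_mul_right hKtail _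
      _ = εE ^ q / 2 := ENNReal.mul_div_cancel h2q0 h2qt
  have hJ : ∫⁻ x, (‖(‖((fR x : ℝ) : ℂ)‖ * w x)‖₊ : ℝ≥0∞) ^ q ∂μ ≤ εE ^ q := by
    calc ∫⁻ x, (‖(‖((fR x : ℝ) : ℂ)‖ * w x)‖₊ : ℝ≥0∞) ^ q ∂μ
        = (∫⁻ x in K, (‖(‖((fR x : ℝ) : ℂ)‖ * w x)‖₊ : ℝ≥0∞) ^ q ∂μ)
          + ∫⁻ x in Kᶜ, (‖(‖((fR x : ℝ) : ℂ)‖ * w x)‖₊ : ℝ≥0∞) ^ q ∂μ :=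
          (lintegral_add_compl _ hKcpt.measurableSet).symm
      _ ≤ εE ^ q / 2 + εE ^ q / 2 := add_le_add hK_side hKc_side
      _ = εE ^ q := ENNReal.add_halves _
  have hsn : eLpNorm (fun x => ‖((fR x : ℝ) : ℂ)‖ * w x) P μ ≤ εE := by
    rw [eLpNorm_eq_lintegral_rpow_enorm_toReal hP0 hPt, hPtr]
    calc (∫⁻ x, (‖(‖((fR x : ℝ) : ℂ)‖ * w x)‖₊ : ℝ≥0∞) ^ q ∂μ) ^ (1 / q)
        ≤ (εE ^ q) ^ (1 / q) := ENNReal.rpow_le_rpow hJ (by positivity)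
      _ = εE := by
          rw [← ENNReal.rpow_mul, mul_one_div_cancel hq.ne', ENNReal.rpow_one]
  constructor
  · exact hmemF
  · exact ENNReal.toReal_le_of_le_ofReal hε.le hsn


end CoorbitQB
end
end
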